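/- Let q be a power of an odd prime and let 𝓗_q be the Hermitian curve X^q Z + X Z^q = Y^{q+1}. Let a ∈ 𝔽_{q²}^× have multiplicative order d', let σ ∈ PGL(3, 𝔽_{q²}) be induced by diag(a^{q+1}, a, 1), and let α ∈ PGL(3, 𝔽_{q²}) be induced by the permutation matrix [[0,0,1],[0,1,0],[1,0,0]]. Then σ and α both map 𝓗_q onto itself, σ has order d', and the order of σα equals 2·d'/gcd(d', q−1). In particular, if a ∈ 𝔽_q^× has order d (so d | q−1), then every element of ⟨σ⟩·α is an involution and ⟨σ, α⟩ is a dihedral group of order 2d. -/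
import Mathlib

lemma diag3 {R : Type*} [Zero R] (x y z : R) :
    Matrix.diagonal ![x, y, z] = !![x, 0, 0; 0, y, 0; 0, 0, z] := by
  ext i j
  fin_cases i <;> fin_cases j <;>
    simp [Matrix.diagonal_apply, Matrix.vecHead, Matrix.vecTail]

lemma orderOf_eq_of_pow_iff {G : Type*} [Group G] (x : G) (n : ℕ)
    (h : ∀ m : ℕ, x ^ m = 1 ↔ n ∣ m) : orderOf x = n :=
  Nat.dvd_antisymm (orderOf_dvd_of_pow_eq_one ((h n).2 dvd_rfl))
    ((h _).1 (pow_orderOf_eq_one x))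

lemma scalar_mem_center {F : Type} [Field F] (u : (Matrix (Fin 3) (Fin 3) F)ˣ) (c : F)
    (hu : (u : Matrix (Fin 3) (Fin 3) F) = c • (1 : Matrix (Fin 3) (Fin 3) F)) :
    u ∈ Subgroup.center (Matrix (Fin 3) (Fin 3) F)ˣ := by
  rw [Subgroup.mem_center_iff]
  intro g
  ext : 1
  simp only [Units.val_mul, hu, Matrix.smul_mul, Matrix.mul_smul, Matrix.one_mul, Matrix.mul_one]

def U01 {F : Type} [Field F] : (Matrix (Fin 3) (Fin 3) F)ˣ :=
  ⟨!![1, 1, 0; 0, 1, 0; 0, 0, 1], !![1, -1, 0; 0, 1, 0; 0, 0, 1],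
    by rw [Matrix.one_fin_three]; norm_num [Matrix.mul_fin_three],
    by rw [Matrix.one_fin_three]; norm_num [Matrix.mul_fin_three]⟩

def U12 {F : Type} [Field F] : (Matrix (Fin 3) (Fin 3) F)ˣ :=
  ⟨!![1, 0, 0; 0, 1, 1; 0, 0, 1], !![1, 0, 0; 0, 1, -1; 0, 0, 1],
    by rw [Matrix.one_fin_three]; norm_num [Matrix.mul_fin_three],
    by rw [Matrix.one_fin_three]; norm_num [Matrix.mul_fin_three]⟩

lemma center_entries {F : Type} [Field F] (u : (Matrix (Fin 3) (Fin 3) F)ˣ)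
    (hu : u ∈ Subgroup.center (Matrix (Fin 3) (Fin 3) F)ˣ) :
    (u : Matrix (Fin 3) (Fin 3) F) 0 0 = (u : Matrix (Fin 3) (Fin 3) F) 1 1 ∧
      (u : Matrix (Fin 3) (Fin 3) F) 1 1 = (u : Matrix (Fin 3) (Fin 3) F) 2 2 := by
  rw [Subgroup.mem_center_iff] at hu
  constructor
  · have h : ((U01 * u : (Matrix (Fin 3) (Fin 3) F)ˣ) : Matrix (Fin 3) (Fin 3) F) 0 1
        = ((u * U01 : (Matrix (Fin 3) (Fin 3) F)ˣ) : Matrix (Fin 3) (Fin 3) F) 0 1 := by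
      rw [hu U01]
    simp [Units.val_mul, U01, Matrix.mul_apply, Fin.sum_univ_three, Matrix.vecHead, Matrix.vecTail] at h
    linear_combination -h
  · have h : ((U12 * u : (Matrix (Fin 3) (Fin 3) F)ˣ) : Matrix (Fin 3) (Fin 3) F) 1 2
        = ((u * U12 : (Matrix (Fin 3) (Fin 3) F)ˣ) : Matrix (Fin 3) (Fin 3) F) 1 2 := by
      rw [hu U12]
    simp [Units.val_mul, U12, Matrix.mul_apply, Fin.sum_univ_three, Matrix.vecHead, Matrix.vecTail] at h
    linear_combination -h

lemma dihedral_aux {G : Type*} [Group G] (σ α : G) (d' : ℕ) (hd' : 0 < d')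
    (hσ : orderOf σ = d') (hα : α * α = 1) (hrel : α * σ * α = σ⁻¹)
    (hne : ∀ k : ℕ, σ ^ k * α ≠ 1) :
    Nat.card (Subgroup.closure {σ, α}) = 2 * d' ∧
      Nonempty ((Subgroup.closure {σ, α}) ≃* DihedralGroup d') := by
  haveI : NeZero d' := ⟨hd'.ne'⟩
  have hαinv : α⁻¹ = α := (eq_inv_of_mul_eq_one_left hα).symm
  have key : ∀ m : ℕ, σ ^ (m % d') = σ ^ m := by
    intro m
    rw [pow_eq_pow_iff_modEq, hσ]
    exact Nat.mod_modEq m d'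
  set f : ZMod d' → G := fun i => σ ^ i.val with hf
  have f_cast : ∀ m : ℕ, f (m : ZMod d') = σ ^ m := by
    intro m
    show σ ^ (((m : ZMod d')).val) = σ ^ m
    rw [ZMod.val_natCast]
    exact key m
  have f_add : ∀ i j : ZMod d', f (i + j) = f i * f j := by
    intro i j
    show σ ^ ((i + j).val) = σ ^ i.val * σ ^ j.val
    rw [ZMod.val_add, key, pow_add]
  have f_zero : f 0 = 1 := by simp [hf]
  have f_neg : ∀ i : ZMod d', f (-i) = (f i)⁻¹ := fun i =>
    eq_inv_of_mul_eq_one_left (by rw [← f_add, neg_add_cancel, f_zero])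
  have hconj : ∀ k : ℕ, α * σ ^ k * α = (σ ^ k)⁻¹ := by
    intro k
    have h1 := conj_pow (a := α) (b := σ) (i := k)
    rw [hαinv, hrel] at h1
    rw [← h1, inv_pow]
  have rel : ∀ i : ZMod d', α * f i = (f i)⁻¹ * α := by
    intro i
    have h1 := hconj i.val
    calc α * f i = (α * σ ^ i.val * α) * α := by
          rw [mul_assoc (α * σ ^ i.val), hα, mul_one]
      _ = (f i)⁻¹ * α := by rw [h1]
  have rel' : ∀ i : ZMod d', f i * α = α * f (-i) := by
    intro i
    rw [rel (-i), f_neg, inv_inv]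
  set φ : DihedralGroup d' → G := fun x => match x with
    | .r i => f i
    | .sr i => α * f i with hφ
  have hmul : ∀ x y : DihedralGroup d', φ (x * y) = φ x * φ y := by
    rintro (i | i) (j | j)
    · show f (i + j) = f i * f j
      exact f_add i j
    · show α * f (j - i) = f i * (α * f j)
      rw [← mul_assoc, rel' i, mul_assoc, ← f_add, sub_eq_neg_add]
    · show α * f (i + j) = (α * f i) * f j
      rw [mul_assoc, f_add]
    · show f (j - i) = (α * f i) * (α * f j)
      rw [mul_assoc, ← mul_assoc (f i), rel' i, ← mul_assoc, ← mul_assoc, hα, one_mul,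
        ← f_add, sub_eq_neg_add]
  set ψ : DihedralGroup d' →* G := MonoidHom.mk' φ hmul with hψ
  have hinj : Function.Injective ψ := by
    rw [injective_iff_map_eq_one]
    rintro (i | i) hx
    · have h1 : σ ^ i.val = 1 := hx
      have hdvd := orderOf_dvd_of_pow_eq_one h1
      rw [hσ] at hdvd
      have hiv : i.val = 0 := Nat.eq_zero_of_dvd_of_lt hdvd (ZMod.val_lt i)
      have : i = 0 := by rwa [← ZMod.val_eq_zero]
      rw [this]
      rfl
    · exfalso
      have h1 : α * f i = 1 := hx
      have hfi : f i = α := by rw [← hαinv]; exact (inv_eq_of_mul_eq_one_right h1).symm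
      exact hne i.val (by rw [show σ ^ i.val = f i from rfl, hfi, hα])
  have hσr : σ ∈ ψ.range := ⟨DihedralGroup.r 1, by
    show f 1 = σ
    rw [show (1 : ZMod d') = ((1 : ℕ) : ZMod d') from (Nat.cast_one).symm, f_cast, pow_one]⟩
  have hαr : α ∈ ψ.range := ⟨DihedralGroup.sr 0, by show α * f 0 = α; rw [f_zero, mul_one]⟩
  have hrange : ψ.range = Subgroup.closure {σ, α} := by
    apply le_antisymm
    · rintro x ⟨y, rfl⟩
      have hσmem : σ ∈ Subgroup.closure {σ, α} :=
        Subgroup.subset_closure (Set.mem_insert σ {α})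
      have hαmem : α ∈ Subgroup.closure {σ, α} :=
        Subgroup.subset_closure (Set.mem_insert_of_mem σ rfl)
      rcases y with i | i
      · exact pow_mem hσmem i.val
      · exact mul_mem hαmem (pow_mem hσmem i.val)
    · rw [Subgroup.closure_le]
      rintro x hx
      simp only [Set.mem_insert_iff, Set.mem_singleton_iff] at hx
      rcases hx with rfl | rfl
      · exact hσr
      · exact hαr
  have e1 : DihedralGroup d' ≃* ψ.range := MonoidHom.ofInjective hinj
  have e2 : (Subgroup.closure {σ, α} : Subgroup G) ≃* DihedralGroup d' :=
    (MulEquiv.subgroupCongr hrange.symm).trans e1.symm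
  constructor
  · rw [Nat.card_congr e2.toEquiv, Nat.card_eq_fintype_card, DihedralGroup.card]
  · exact ⟨e2⟩
/-- The Hermitian polynomial in norm–trace form, `X^q Z + X Z^q - Y^(q+1)`. -/
def hermNTEval (q : ℕ) {K : Type} [Field K] (v : Fin 3 → K) : K :=
  v 0 ^ q * v 2 + v 0 * v 2 ^ q - v 1 ^ (q + 1)

/-- The action of a matrix with entries in `F` on vectors over an extension `K`. -/
def applyMat {F K : Type} [Field F] [Field K] [Algebra F K]
    (g : Matrix (Fin 3) (Fin 3) F) (v : Fin 3 → K) : Fin 3 → K :=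
  (g.map (algebraMap F K)).mulVec v

/-- Let `q` be a power of an odd prime and `𝓗_q : X^q Z + X Z^q = Y^(q+1)`.
Let `a ∈ 𝔽_{q²}ˣ` have order `d'`, let `σ` be the projectivity induced by
`diag(a^(q+1), a, 1)` and `α` the one induced by `[[0,0,1],[0,1,0],[1,0,0]]`.
Then `σ` and `α` preserve `𝓗_q`, `σ` has order `d'` and `σα` has order
`2 d' / gcd(d', q-1)`.  If moreover `a ∈ 𝔽_qˣ` has order `d` (so `d ∣ q-1`), then every
element of `⟨σ⟩·α` is an involution and `⟨σ, α⟩` is dihedral of order `2d`. -/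
theorem stmt_17 (p : ℕ) (hp : p.Prime) (hodd : p ≠ 2) (h : ℕ) (hh : 1 ≤ h)
    (q : ℕ) (hq : q = p ^ h)
    (F : Type) [Field F] [Fintype F] (hF : Fintype.card F = q ^ 2)
    (K : Type) [Field K] [IsAlgClosed K] [Algebra F K]
    (a : F) (d' : ℕ) (hd' : 0 < d') (ha : orderOf a = d')
    (s t : Matrix.GeneralLinearGroup (Fin 3) F)
    (hs : (s : Matrix (Fin 3) (Fin 3) F) = !![a ^ (q + 1), 0, 0; 0, a, 0; 0, 0, 1])
    (ht : (t : Matrix (Fin 3) (Fin 3) F) = !![0, 0, 1; 0, 1, 0; 1, 0, 0]) :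
    (∀ g ∈ ({s, t} : Set (Matrix.GeneralLinearGroup (Fin 3) F)),
      ∀ v : Fin 3 → K, v ≠ 0 →
        (hermNTEval q v = 0 ↔ hermNTEval q (applyMat (g : Matrix (Fin 3) (Fin 3) F) v) = 0)) ∧
    (let σ : Matrix.GeneralLinearGroup (Fin 3) F ⧸
        Subgroup.center (Matrix.GeneralLinearGroup (Fin 3) F) := QuotientGroup.mk s
     let α : Matrix.GeneralLinearGroup (Fin 3) F ⧸
        Subgroup.center (Matrix.GeneralLinearGroup (Fin 3) F) := QuotientGroup.mk t
     orderOf σ = d' ∧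
      orderOf (σ * α) = 2 * d' / Nat.gcd d' (q - 1) ∧
      (a ^ q = a →
        (∀ k : ℕ, orderOf (σ ^ k * α) = 2) ∧
        d' ∣ q - 1 ∧
        Nat.card (Subgroup.closure {σ, α}) = 2 * d' ∧
        Nonempty ((Subgroup.closure {σ, α}) ≃* DihedralGroup d'))) := by
  have hp3 : 3 ≤ p := by have := hp.two_le; omega
  have hq3 : 3 ≤ q := le_trans hp3 (by rw [hq]; exact Nat.le_self_pow (by omega) p)
  have hq1 : 1 ≤ q := by omega
  have had : a ^ d' = 1 := by rw [← ha]; exact pow_orderOf_eq_one a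
  have ha0 : a ≠ 0 := by
    intro h0
    rw [h0, zero_pow hd'.ne'] at had
    exact zero_ne_one had
  have hacard : a ^ (q ^ 2 - 1) = 1 := by
    have h1 := FiniteField.pow_card_sub_one_eq_one a ha0
    rwa [hF] at h1
  have haqq : a ^ (q * (q + 1)) = a ^ (q + 1) := by
    have e2 : q ^ 2 = q * q := sq q
    have e1 : q * (q + 1) = q * q + q := by ring
    have e3 : 1 ≤ q * q := Nat.one_le_iff_ne_zero.2 (by positivity)
    have e4 : q * (q + 1) = (q ^ 2 - 1) + (q + 1) := by omega
    rw [e4, pow_add, hacard, one_mul]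
  constructor
  · -- curve preservation
    intro g hg v hv
    clear hv
    simp only [Set.mem_insert_iff, Set.mem_singleton_iff] at hg
    rcases hg with rfl | rfl
    · have hbne : algebraMap F K (a ^ (q + 1)) ≠ 0 := by simp [ha0]
      have hb : (algebraMap F K a) ^ (q * (q + 1)) = (algebraMap F K a) ^ (q + 1) := by
        rw [← map_pow, ← map_pow, haqq]
      have hav : applyMat ((g : Matrix (Fin 3) (Fin 3) F)) v
          = ![(algebraMap F K a) ^ (q+1) * v 0, algebraMap F K a * v 1, v 2] := by
        funext i
        fin_cases i <;>
          simp [applyMat, hs, Matrix.mulVec, dotProduct, Fin.sum_univ_three,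
            Matrix.vecHead, Matrix.vecTail, map_pow]
      have hev : hermNTEval q (applyMat ((g : Matrix (Fin 3) (Fin 3) F)) v)
          = algebraMap F K (a ^ (q + 1)) * hermNTEval q v := by
        rw [hav]
        show ((algebraMap F K a) ^ (q+1) * v 0) ^ q * v 2
            + ((algebraMap F K a) ^ (q+1) * v 0) * v 2 ^ q
            - (algebraMap F K a * v 1) ^ (q+1)
          = algebraMap F K (a ^ (q + 1)) * hermNTEval q v
        rw [map_pow]
        show _ = (algebraMap F K a) ^ (q+1)
          * (v 0 ^ q * v 2 + v 0 * v 2 ^ q - v 1 ^ (q + 1))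
        linear_combination (v 0 ^ q * v 2) * hb
      rw [hev, mul_eq_zero]
      constructor
      · exact fun h0 => Or.inr h0
      · rintro (h0 | h0)
        · exact absurd h0 hbne
        · exact h0
    · have hav : applyMat ((g : Matrix (Fin 3) (Fin 3) F)) v = ![v 2, v 1, v 0] := by
        funext i
        fin_cases i <;>
          simp [applyMat, ht, Matrix.mulVec, dotProduct, Fin.sum_univ_three,
            Matrix.vecHead, Matrix.vecTail]
      have hev : hermNTEval q (applyMat ((g : Matrix (Fin 3) (Fin 3) F)) v)
          = hermNTEval q v := by
        rw [hav]
        show v 2 ^ q * v 0 + v 2 * v 0 ^ q - v 1 ^ (q+1)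
          = v 0 ^ q * v 2 + v 0 * v 2 ^ q - v 1 ^ (q + 1)
        ring
      rw [hev]
  · intro σ α
    have hσdef : σ = QuotientGroup.mk s := rfl
    have hαdef : α = QuotientGroup.mk t := rfl
    have hsmul : ∀ c : F, c • (1 : Matrix (Fin 3) (Fin 3) F) = !![c,0,0;0,c,0;0,0,c] := by
      intro c
      rw [Matrix.one_fin_three]
      ext i j
      fin_cases i <;> fin_cases j <;>
        simp [Matrix.smul_apply, Matrix.vecHead, Matrix.vecTail]
    have hveck : ∀ k : ℕ, (![a ^ (q+1), a, (1:F)]) ^ k = ![a ^ ((q+1)*k), a ^ k, 1] := by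
      intro k
      funext i
      fin_cases i <;> simp [Pi.pow_apply, pow_mul]
    have hspow : ∀ k : ℕ, ((s ^ k : Matrix.GeneralLinearGroup (Fin 3) F) : Matrix (Fin 3) (Fin 3) F)
        = !![a^((q+1)*k),0,0;0,a^k,0;0,0,1] := by
      intro k
      rw [Units.val_pow_eq_pow_val, hs, ← diag3, Matrix.diagonal_pow, hveck, diag3]
    have hσpow : ∀ k : ℕ, σ ^ k = 1 ↔ d' ∣ k := by
      intro k
      rw [hσdef, ← QuotientGroup.mk_pow, QuotientGroup.eq_one_iff]
      constructor
      · intro hc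
        have h2 := (center_entries _ hc).2
        rw [hspow k] at h2
        norm_num at h2
        rw [← ha]
        exact orderOf_dvd_of_pow_eq_one h2
      · intro hdk
        have hak : a ^ k = 1 := orderOf_dvd_iff_pow_eq_one.1 (ha ▸ hdk)
        have hak2 : a ^ ((q+1)*k) = 1 := by rw [mul_comm, pow_mul, hak, one_pow]
        apply scalar_mem_center _ 1
        rw [hspow k, hak, hak2, hsmul]
    have hσord : orderOf σ = d' := orderOf_eq_of_pow_iff σ d' hσpow
    have hstv : ((s * t : Matrix.GeneralLinearGroup (Fin 3) F) : Matrix (Fin 3) (Fin 3) F)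
        = !![0,0,a^(q+1);0,a,0;1,0,0] := by
      rw [Units.val_mul, hs, ht, Matrix.mul_fin_three]
      norm_num
    have hst2 : (((s*t)^2 : Matrix.GeneralLinearGroup (Fin 3) F) : Matrix (Fin 3) (Fin 3) F)
        = !![a^(q+1),0,0;0,a^2,0;0,0,a^(q+1)] := by
      rw [Units.val_pow_eq_pow_val, pow_two, hstv, Matrix.mul_fin_three]
      norm_num [sq]
    have hvecst : ∀ k : ℕ, (![a^(q+1), a^2, a^(q+1)] : Fin 3 → F)^k
        = ![a^((q+1)*k), a^(2*k), a^((q+1)*k)] := by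
      intro k
      funext i
      fin_cases i <;> simp [Pi.pow_apply, pow_mul]
    have hst2k : ∀ k : ℕ, (((s*t)^(2*k) : Matrix.GeneralLinearGroup (Fin 3) F) : Matrix (Fin 3) (Fin 3) F)
        = !![a^((q+1)*k),0,0;0,a^(2*k),0;0,0,a^((q+1)*k)] := by
      intro k
      rw [pow_mul, Units.val_pow_eq_pow_val, hst2, ← diag3, Matrix.diagonal_pow, hvecst, diag3]
    have hstodd : ∀ k : ℕ,
        (((s*t)^(2*k+1) : Matrix.GeneralLinearGroup (Fin 3) F) : Matrix (Fin 3) (Fin 3) F) 0 0 = 0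
        ∧ (((s*t)^(2*k+1) : Matrix.GeneralLinearGroup (Fin 3) F) : Matrix (Fin 3) (Fin 3) F) 1 1
          = a^(2*k) * a := by
      intro k
      rw [pow_succ, Units.val_mul, hst2k k, ← diag3]
      constructor <;> simp [Matrix.diagonal_mul, hstv]
    have hsplit : ∀ k : ℕ, (q+1) * k = (q-1)*k + 2*k := by
      intro k
      have hone : q + 1 = (q-1) + 2 := by omega
      rw [hone, add_mul]
    set gq := Nat.gcd d' (q - 1) with hgqdef
    have hg0 : 0 < gq := Nat.gcd_pos_of_pos_left _ hd'
    set e := d' / gq with hedef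
    have hgd : gq ∣ d' := Nat.gcd_dvd_left _ _
    have hgq1 : gq ∣ (q - 1) := Nat.gcd_dvd_right _ _
    have hdvd_iff : ∀ k : ℕ, d' ∣ (q - 1) * k ↔ e ∣ k := by
      intro k
      have hd'eq : e * gq = d' := Nat.div_mul_cancel hgd
      have hqeq : ((q-1)/gq) * gq = q - 1 := Nat.div_mul_cancel hgq1
      have hcop : Nat.Coprime e ((q-1)/gq) := Nat.coprime_div_gcd_div_gcd hg0
      constructor
      · intro hk
        rw [← hd'eq, ← hqeq] at hk
        rw [show ((q-1)/gq) * gq * k = (k * ((q-1)/gq)) * gq by ring] at hk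
        exact hcop.dvd_of_dvd_mul_right ((Nat.mul_dvd_mul_iff_right hg0).1 hk)
      · intro hk
        rw [← hd'eq]
        have h1 : e * gq ∣ k * gq := mul_dvd_mul_right hk gq
        have h2 : k * gq ∣ (q-1) * k :=
          ⟨(q-1)/gq, by rw [mul_assoc, Nat.mul_div_cancel' hgq1, mul_comm]⟩
        exact h1.trans h2
    have hstpow : ∀ n : ℕ, (σ * α) ^ n = 1 ↔ (2 * e) ∣ n := by
      intro n
      rw [hσdef, hαdef, ← QuotientGroup.mk_mul, ← QuotientGroup.mk_pow, QuotientGroup.eq_one_iff]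
      obtain ⟨k, rfl | rfl⟩ := Nat.even_or_odd' n
      · constructor
        · intro hc
          have h1 := (center_entries _ hc).1
          rw [hst2k k] at h1
          norm_num at h1
          rw [hsplit k, pow_add] at h1
          have h2 : a ^ ((q-1)*k) = 1 :=
            mul_right_cancel₀ (pow_ne_zero (2*k) ha0) (h1.trans (one_mul (a^(2*k))).symm)
          have h3 : d' ∣ (q-1)*k := by rw [← ha]; exact orderOf_dvd_of_pow_eq_one h2
          exact mul_dvd_mul_left 2 ((hdvd_iff k).1 h3)
        · intro hk
          have hek : e ∣ k := (Nat.mul_dvd_mul_iff_left (by norm_num : 0 < 2)).1 hk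
          have h3 : a ^ ((q-1)*k) = 1 :=
            orderOf_dvd_iff_pow_eq_one.1 (ha ▸ (hdvd_iff k).2 hek)
          have h4 : a ^ ((q+1)*k) = a ^ (2*k) := by
            rw [hsplit k, pow_add, h3, one_mul]
          apply scalar_mem_center _ (a^(2*k))
          rw [hst2k k, h4, hsmul]
      · constructor
        · intro hc
          have h1 := (center_entries _ hc).1
          rw [(hstodd k).1, (hstodd k).2] at h1
          exact absurd h1.symm (mul_ne_zero (pow_ne_zero _ ha0) ha0)
        · intro hk
          exfalso
          have h2 : (2:ℕ) ∣ 2*k+1 := dvd_trans ⟨e, rfl⟩ hk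
          omega
    have hσαord : orderOf (σ * α) = 2 * d' / gq := by
      rw [orderOf_eq_of_pow_iff _ _ hstpow, Nat.mul_div_assoc 2 hgd]
    refine ⟨hσord, hσαord, ?_⟩
    intro haq
    have haq1 : a ^ (q - 1) = 1 := by
      have h1 : a ^ (q - 1) * a = 1 * a := by
        rw [← pow_succ, show q - 1 + 1 = q by omega, haq, one_mul]
      exact mul_right_cancel₀ ha0 h1
    have hddvd : d' ∣ q - 1 := by rw [← ha]; exact orderOf_dvd_of_pow_eq_one haq1
    have haq2 : a ^ (q + 1) = a ^ 2 := by rw [pow_succ, haq, ← sq]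
    have hsktv : ∀ k : ℕ,
        ((s^k * t : Matrix.GeneralLinearGroup (Fin 3) F) : Matrix (Fin 3) (Fin 3) F)
        = !![0,0,a^((q+1)*k);0,a^k,0;1,0,0] := by
      intro k
      rw [Units.val_mul, hspow k, ht, Matrix.mul_fin_three]
      norm_num
    have hinv : ∀ k : ℕ, orderOf (σ ^ k * α) = 2 := by
      intro k
      have hx : a^((q+1)*k) = a^(2*k) := by rw [pow_mul, haq2, ← pow_mul]
      have hne1 : σ ^ k * α ≠ 1 := by
        rw [hσdef, hαdef, ← QuotientGroup.mk_pow, ← QuotientGroup.mk_mul]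
        intro hc
        rw [QuotientGroup.eq_one_iff] at hc
        have h1 := (center_entries _ hc).1
        rw [hsktv k] at h1
        norm_num at h1
        exact pow_ne_zero k ha0 h1.symm
      have hsq2 : (σ ^ k * α) ^ 2 = 1 := by
        rw [hσdef, hαdef, ← QuotientGroup.mk_pow, ← QuotientGroup.mk_mul,
          ← QuotientGroup.mk_pow, QuotientGroup.eq_one_iff]
        apply scalar_mem_center _ (a ^ (2*k))
        rw [Units.val_pow_eq_pow_val, pow_two, hsktv k, Matrix.mul_fin_three, hsmul]
        ext i j
        fin_cases i <;> fin_cases j <;> simp [hx, two_mul, pow_add]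
      exact orderOf_eq_prime hsq2 hne1
    have hα2 : α * α = 1 := by
      have h0 := hinv 0
      rw [pow_zero, one_mul] at h0
      have h1 : α ^ 2 = 1 := h0 ▸ pow_orderOf_eq_one α
      rwa [pow_two] at h1
    have htsts : ((t*s*t*s : Matrix.GeneralLinearGroup (Fin 3) F) : Matrix (Fin 3) (Fin 3) F)
        = a^2 • 1 := by
      rw [Units.val_mul, Units.val_mul, Units.val_mul, hs, ht, Matrix.mul_fin_three,
        Matrix.mul_fin_three, Matrix.mul_fin_three, hsmul]
      ext i j
      fin_cases i <;> fin_cases j <;> simp [haq2, sq]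
    have hrel : α * σ * α = σ⁻¹ := by
      have hmem : (t*s*t*s) ∈ Subgroup.center (Matrix.GeneralLinearGroup (Fin 3) F) :=
        scalar_mem_center _ (a^2) htsts
      have h1 : (QuotientGroup.mk (t*s*t*s) :
          Matrix.GeneralLinearGroup (Fin 3) F ⧸
            Subgroup.center (Matrix.GeneralLinearGroup (Fin 3) F)) = 1 :=
        (QuotientGroup.eq_one_iff _).2 hmem
      rw [QuotientGroup.mk_mul, QuotientGroup.mk_mul, QuotientGroup.mk_mul] at h1
      rw [hσdef, hαdef]
      exact eq_inv_of_mul_eq_one_left h1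
    have hne' : ∀ k : ℕ, σ ^ k * α ≠ 1 := by
      intro k hk
      have := hinv k
      rw [hk, orderOf_one] at this
      omega
    obtain ⟨hcard, hequiv⟩ := dihedral_aux σ α d' hd' hσord hα2 hrel hne'
    exact ⟨hinv, hddvd, hcard, hequiv⟩
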